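/- arXiv:2208.12520 — 2 statements merged into one kernel-verified Lean document; each statement's English description precedes it below -/
import Mathlib

section
/- Let F : ℝⁿ → Set ℝⁿ be upper semicontinuous with F(x) nonempty, compact, and convex for every x, and let X_o, X_u ⊆ ℝⁿ. If the system ẋ ∈ F(x) is strongly robustly safe with respect to (X_o, X_u) and either ℝⁿ \ X_u is bounded or ℝⁿ \ X_o is bounded, then the system ẋ ∈ F(x) is uniformly strongly robustly safe with respect to (X_o, X_u). -/
open Metric Set Filter MeasureTheory
open scoped Pointwise RealInnerProductSpace Topology

variable {E : Type*} [NormedAddCommGroup E] [NormedSpace ℝ E]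

/-- Admissible solution domains: `[0,T]`, `[0,T)`, or `[0,∞)`. -/
def SolDomain (D : Set ℝ) : Prop :=
  (∃ T : ℝ, 0 ≤ T ∧ D = Set.Icc 0 T) ∨ (∃ T : ℝ, 0 < T ∧ D = Set.Ico 0 T) ∨ D = Set.Ici 0

/-- `φ` is a (locally absolutely continuous) solution of `ẋ ∈ F x` on `D`,
expressed in integral form: `φ t = φ 0 + ∫₀ᵗ v`, with `v t ∈ F (φ t)` a.e. on `D`. -/
def IsSolutionOn (F : E → Set E) (φ : ℝ → E) (D : Set ℝ) : Prop :=
  SolDomain D ∧ ∃ v : ℝ → E,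
    (∀ t ∈ D, MeasureTheory.IntegrableOn v (Set.Icc 0 t)) ∧
    (∀ t ∈ D, φ t = φ 0 + ∫ s in (0:ℝ)..t, v s) ∧
    (∀ᵐ t ∂(MeasureTheory.volume.restrict D), v t ∈ F (φ t))

/-- Safety: no solution starting in `Xo` ever reaches `Xu`. -/
def Safe (F : E → Set E) (Xo Xu : Set E) : Prop :=
  ∀ (φ : ℝ → E) (D : Set ℝ), IsSolutionOn F φ D → φ 0 ∈ Xo → ∀ t ∈ D, φ t ∉ Xu

/-- Forward invariance of `K`. -/
def ForwardInvariant (F : E → Set E) (K : Set E) : Prop :=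
  ∀ (φ : ℝ → E) (D : Set ℝ), IsSolutionOn F φ D → φ 0 ∈ K → ∀ t ∈ D, φ t ∈ K

/-- Image of a set under a set-valued map: `F(S) = ⋃_{y ∈ S} F(y)`. -/
def svImage (F : E → Set E) (S : Set E) : Set E := ⋃ y ∈ S, F y

/-- Right-hand side of the strongly perturbed system `Σ^s_ε`:
`conv (F (x + ε(x)𝔹)) + ε(x)𝔹`. -/
def strongPert (F : E → Set E) (ε : E → ℝ) (x : E) : Set E :=
  convexHull ℝ (svImage F (Metric.closedBall x (ε x))) + Metric.closedBall (0:E) (ε x)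

/-- Right-hand side of the (ordinary) perturbed system `Σ_ε`: `F x + ε(x)𝔹`. -/
def pert (F : E → Set E) (ε : E → ℝ) (x : E) : Set E :=
  F x + Metric.closedBall (0:E) (ε x)

def RobustlySafe (F : E → Set E) (Xo Xu : Set E) : Prop :=
  ∃ ε : E → ℝ, Continuous ε ∧ (∀ x, 0 < ε x) ∧ Safe (pert F ε) Xo Xu

def StronglyRobustlySafe (F : E → Set E) (Xo Xu : Set E) : Prop :=
  ∃ ε : E → ℝ, Continuous ε ∧ (∀ x, 0 < ε x) ∧ Safe (strongPert F ε) Xo Xu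

def UniformlyStronglyRobustlySafe (F : E → Set E) (Xo Xu : Set E) : Prop :=
  ∃ ε : ℝ, 0 < ε ∧ Safe (strongPert F (fun _ => ε)) Xo Xu

/-- Upper semicontinuity of a set-valued map. -/
def UpperSemicontinuousSV (F : E → Set E) : Prop :=
  ∀ x : E, ∀ U : Set E, IsOpen U → F x ⊆ U → ∀ᶠ y in nhds x, F y ⊆ U

/-- Lower semicontinuity of a set-valued map (sequential form). -/
def LowerSemicontinuousSV (F : E → Set E) : Prop :=
  ∀ x : E, ∀ y ∈ F x, ∀ u : ℕ → E, Filter.Tendsto u Filter.atTop (nhds x) →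
    ∃ v : ℕ → E, (∀ i, v i ∈ F (u i)) ∧ Filter.Tendsto v Filter.atTop (nhds y)

/-!
On the compact ball `closedBall 0 (R + 1)` the continuous margin `ε` has a positive minimum `δ`,
so while a trajectory of `Σ^s_δ` stays in that ball it is, after a time shift, a trajectory of
`Σ^s_ε`, and hence cannot go from `Xo` to `Xu`. If `Xuᶜ ⊆ closedBall 0 R`, a trajectory from `Xo`
starts in `closedBall 0 R` and is in `Xu` as soon as it leaves `closedBall 0 (R + 1)`: follow it up
to the first such time. If `Xoᶜ ⊆ closedBall 0 R`, a point of `Xu` lies in `closedBall 0 R`: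
follow the trajectory from the last time it is outside `closedBall 0 (R + 1)`, where it is in `Xo`.
-/

namespace SolDomain

variable {D : Set ℝ}

lemma nonneg (h : SolDomain D) {t : ℝ} (ht : t ∈ D) : 0 ≤ t := by
  rcases h with ⟨T, -, rfl⟩ | ⟨T, -, rfl⟩ | rfl
  exacts [ht.1, ht.1, ht]

lemma Icc_subset (h : SolDomain D) {t : ℝ} (ht : t ∈ D) : Icc 0 t ⊆ D := by
  rcases h with ⟨T, -, rfl⟩ | ⟨T, -, rfl⟩ | rfl
  · exact Icc_subset_Icc le_rfl ht.2
  · exact fun s hs => ⟨hs.1, hs.2.trans_lt ht.2⟩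
  · exact fun s hs => hs.1

end SolDomain

namespace IsSolutionOn

variable {F G : E → Set E} {φ : ℝ → E} {D : Set ℝ}

lemma continuousOn_Icc [CompleteSpace E] (h : IsSolutionOn F φ D) {T : ℝ} (hT : T ∈ D) :
    ContinuousOn φ (Icc 0 T) := by
  obtain ⟨hD, v, hint, heq, -⟩ := h
  have hprim := intervalIntegral.continuousOn_primitive (hint T hT)
  refine (hprim.const_add (φ 0)).congr fun t ht => ?_
  rw [heq t (hD.Icc_subset hT ht), intervalIntegral.integral_of_le ht.1]

lemma restrict_Icc (h : IsSolutionOn F φ D) {T : ℝ} (hT : T ∈ D) :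
    IsSolutionOn F φ (Icc 0 T) := by
  obtain ⟨hD, v, hint, heq, hae⟩ := h
  exact ⟨Or.inl ⟨T, hD.nonneg hT, rfl⟩, v, fun t ht => hint t (hD.Icc_subset hT ht),
    fun t ht => heq t (hD.Icc_subset hT ht),
    ae_restrict_of_ae_restrict_of_subset (hD.Icc_subset hT) hae⟩

lemma mono (h : IsSolutionOn F φ D) (hD : MeasurableSet D)
    (hFG : ∀ t ∈ D, F (φ t) ⊆ G (φ t)) : IsSolutionOn G φ D := by
  obtain ⟨hdom, v, hint, heq, hae⟩ := h
  refine ⟨hdom, v, hint, heq, ?_⟩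
  filter_upwards [hae, ae_restrict_mem hD] with t hvt ht
  exact hFG t ht hvt

lemma comp_const_add {T : ℝ} (h : IsSolutionOn F φ (Icc 0 T)) {a : ℝ} (ha : a ∈ Icc 0 T) :
    IsSolutionOn F (fun t => φ (a + t)) (Icc 0 (T - a)) := by
  obtain ⟨-, v, hint, heq, hae⟩ := h
  have hmp := measurePreserving_add_left volume a
  have hemb := measurableEmbedding_addLeft a
  have hpre : ∀ b c : ℝ, (a + ·) ⁻¹' Icc (a + b) (a + c) = Icc b c := fun b c => by
    simp [preimage_const_add_Icc]
  have hshift : ∀ t ∈ Icc 0 (T - a), a + t ∈ Icc 0 T := fun t ht =>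
    ⟨by linarith [ha.1, ht.1], by linarith [ht.2]⟩
  have hint' : ∀ t ∈ Icc 0 (T - a), IntegrableOn v (Icc a (a + t)) := fun t ht =>
    (hint _ (hshift t ht)).mono_set (Icc_subset_Icc ha.1 le_rfl)
  refine ⟨Or.inl ⟨T - a, by linarith [ha.2], rfl⟩, fun t => v (a + t), fun t ht => ?_,
    fun t ht => ?_, ?_⟩
  · rw [← hpre 0 t, add_zero]
    exact (hmp.integrableOn_comp_preimage hemb).2 (hint' t ht)
  · have hia : IntervalIntegrable v volume 0 a :=
      (intervalIntegrable_iff_integrableOn_Icc_of_le ha.1).2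
        ((hint _ (hshift t ht)).mono_set (Icc_subset_Icc le_rfl (by linarith [ht.1])))
    have hib : IntervalIntegrable v volume a (a + t) :=
      (intervalIntegrable_iff_integrableOn_Icc_of_le (by linarith [ht.1])).2 (hint' t ht)
    show φ (a + t) = φ (a + 0) + ∫ s in 0..t, v (a + s)
    rw [heq _ (hshift t ht), add_zero, heq a ha, intervalIntegral.integral_comp_add_left, add_zero,
      add_assoc, intervalIntegral.integral_add_adjacent_intervals hia hib]
  · have hmp' := hmp.restrict_preimage_emb hemb (Icc (a + 0) (a + (T - a)))
    rw [hpre, add_zero, add_sub_cancel] at hmp'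
    exact hmp'.quasiMeasurePreserving.ae
      (ae_restrict_of_ae_restrict_of_subset (Icc_subset_Icc ha.1 le_rfl) hae)

end IsSolutionOn

lemma isSolutionOn_Icc_zero (F : E → Set E) (φ : ℝ → E) : IsSolutionOn F φ (Icc 0 0) := by
  refine ⟨Or.inl ⟨0, le_rfl, rfl⟩, 0, fun _ _ => integrableOn_zero, fun t ht => ?_, ?_⟩
  · obtain rfl : t = 0 := le_antisymm ht.2 ht.1
    simp
  · simp

namespace Safe

variable {F G : E → Set E} {Xo Xu : Set E}

lemma notMem_of_mem (h : Safe F Xo Xu) {x : E} (hx : x ∈ Xo) : x ∉ Xu :=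
  h (fun _ => x) _ (isSolutionOn_Icc_zero F _) hx 0 ⟨le_rfl, le_rfl⟩

lemma notMem_of_mapsTo (h : Safe F Xo Xu) {K : Set E} (hGF : ∀ x ∈ K, G x ⊆ F x)
    {φ : ℝ → E} {D : Set ℝ} (hφ : IsSolutionOn G φ D) {a T : ℝ} (ha : 0 ≤ a) (haT : a ≤ T)
    (hT : T ∈ D) (hXo : φ a ∈ Xo) (hK : MapsTo φ (Icc a T) K) : φ T ∉ Xu := by
  have hsol := ((hφ.restrict_Icc hT).comp_const_add ⟨ha, haT⟩).mono measurableSet_Icc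
    fun t ht => hGF _ (hK ⟨by linarith [ht.1], by linarith [ht.2]⟩)
  simpa using h _ _ hsol (by simpa using hXo) (T - a) ⟨by linarith, le_rfl⟩

end Safe

lemma strongPert_mono {F : E → Set E} {ε₁ ε₂ : E → ℝ} {x : E} (h : ε₁ x ≤ ε₂ x) :
    strongPert F ε₁ x ⊆ strongPert F ε₂ x :=
  add_subset_add (convexHull_mono (biUnion_subset_biUnion_left (closedBall_subset_closedBall h)))
    (closedBall_subset_closedBall h)

lemma IsCompact.exists_pos_forall_le {X : Type*} [TopologicalSpace X] {K : Set X} {f : X → ℝ}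
    (hK : IsCompact K) (hf : ContinuousOn f K) (hpos : ∀ x ∈ K, 0 < f x) :
    ∃ δ > 0, ∀ x ∈ K, δ ≤ f x := by
  rcases K.eq_empty_or_nonempty with rfl | hne
  · exact ⟨1, one_pos, by simp⟩
  · obtain ⟨x₀, hx₀, hmin⟩ := hK.exists_isMinOn hne hf
    exact ⟨f x₀, hpos x₀ hx₀, hmin⟩

namespace ContinuousOn

variable {f : ℝ → ℝ} {a b c : ℝ}

lemma exists_first_ge_of_lt (hf : ContinuousOn f (Icc a b)) (hab : a ≤ b) (ha : f a < c) :
    ∃ T ∈ Icc a b, (∀ s ∈ Icc a T, f s ≤ c) ∧ (T = b ∨ c ≤ f T) := by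
  by_cases hstay : ∀ s ∈ Icc a b, f s ≤ c
  · exact ⟨b, right_mem_Icc.2 hab, hstay, Or.inl rfl⟩
  push Not at hstay
  obtain ⟨s₀, hs₀, hcs₀⟩ := hstay
  set S := Icc a b ∩ f ⁻¹' Ici c
  have hbdd : BddBelow S := ⟨a, fun s hs => hs.1.1⟩
  have hTS : sInf S ∈ S :=
    (hf.preimage_isClosed_of_isClosed isClosed_Icc isClosed_Ici).csInf_mem ⟨s₀, hs₀, hcs₀.le⟩ hbdd
  have haT : a < sInf S := hTS.1.1.lt_of_ne fun h => (h ▸ ha).not_ge hTS.2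
  refine ⟨sInf S, hTS.1, ?_, Or.inr hTS.2⟩
  have hIco : Ico a (sInf S) ⊆ Icc a b ∩ f ⁻¹' Iic c := fun s hs =>
    have hsab : s ∈ Icc a b := ⟨hs.1, hs.2.le.trans hTS.1.2⟩
    ⟨hsab, show f s ≤ c from not_lt.1 fun hcs => (csInf_le hbdd ⟨hsab, hcs.le⟩).not_gt hs.2⟩
  have hIcc :=
    (hf.preimage_isClosed_of_isClosed isClosed_Icc isClosed_Iic).closure_subset_iff.2 hIco
  rw [closure_Ico haT.ne] at hIcc
  exact fun s hs => (hIcc hs).2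

lemma exists_last_ge_of_lt (hf : ContinuousOn f (Icc a b)) (hab : a ≤ b) (hb : f b < c) :
    ∃ σ ∈ Icc a b, (∀ s ∈ Icc σ b, f s ≤ c) ∧ (σ = a ∨ c ≤ f σ) := by
  have hrefl : MapsTo (fun t => a + b - t) (Icc a b) (Icc a b) := fun t ht =>
    ⟨by linarith [ht.2], by linarith [ht.1]⟩
  obtain ⟨T, hT, hle, hend⟩ :=
    (hf.comp (by fun_prop) hrefl).exists_first_ge_of_lt hab (by simpa using hb)
  refine ⟨a + b - T, hrefl hT, fun s hs => ?_, hend.imp (fun h => by linarith) id⟩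
  simpa using hle (a + b - s) ⟨by linarith [hs.2], by linarith [hs.1]⟩

end ContinuousOn

namespace Safe

variable [CompleteSpace E] {F G : E → Set E} {Xo Xu : Set E} {R : ℝ}

lemma of_compl_unsafe_subset_closedBall (h : Safe F Xo Xu)
    (hGF : ∀ x ∈ closedBall (0 : E) (R + 1), G x ⊆ F x) (hXu : Xuᶜ ⊆ closedBall 0 R) :
    Safe G Xo Xu := by
  intro φ D hφ h0 t ht hφt
  have h0R : ‖φ 0‖ < R + 1 := by
    linarith [mem_closedBall_zero_iff.1 (hXu (h.notMem_of_mem h0))]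
  obtain ⟨T, hT, hle, hend⟩ :=
    (hφ.continuousOn_Icc ht).norm.exists_first_ge_of_lt (hφ.1.nonneg ht) h0R
  refine h.notMem_of_mapsTo hGF hφ le_rfl hT.1 (hφ.1.Icc_subset ht hT) h0
    (fun s hs => mem_closedBall_zero_iff.2 (hle s hs)) ?_
  rcases hend with rfl | hRT
  · exact hφt
  · by_contra hφT
    linarith [mem_closedBall_zero_iff.1 (hXu hφT)]

lemma of_compl_initial_subset_closedBall (h : Safe F Xo Xu)
    (hGF : ∀ x ∈ closedBall (0 : E) (R + 1), G x ⊆ F x) (hXo : Xoᶜ ⊆ closedBall 0 R) :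
    Safe G Xo Xu := by
  intro φ D hφ h0 t ht hφt
  have hmemXo : ∀ x : E, R < ‖x‖ → x ∈ Xo := fun x hx => by
    by_contra hx'
    linarith [mem_closedBall_zero_iff.1 (hXo hx')]
  have htR : ‖φ t‖ < R + 1 := by
    by_contra! htR
    exact h.notMem_of_mem (hmemXo _ (by linarith)) hφt
  obtain ⟨σ, hσ, hle, hstart⟩ :=
    (hφ.continuousOn_Icc ht).norm.exists_last_ge_of_lt (hφ.1.nonneg ht) htR
  have hσXo : φ σ ∈ Xo := by
    rcases hstart with rfl | hRσ
    · exact h0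
    · exact hmemXo _ (by linarith)
  exact h.notMem_of_mapsTo hGF hφ hσ.1 hσ.2 ht hσXo
    (fun s hs => mem_closedBall_zero_iff.2 (hle s hs)) hφt

end Safe

theorem stmt6_general {n : ℕ} (F : EuclideanSpace ℝ (Fin n) → Set (EuclideanSpace ℝ (Fin n)))
    (Xo Xu : Set (EuclideanSpace ℝ (Fin n)))
    (hsrs : StronglyRobustlySafe F Xo Xu)
    (hbd : Bornology.IsBounded Xuᶜ ∨ Bornology.IsBounded Xoᶜ) :
    UniformlyStronglyRobustlySafe F Xo Xu := by
  obtain ⟨ε, hεc, hεpos, hsafe⟩ := hsrs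
  obtain ⟨R, hR⟩ : ∃ R, Xuᶜ ⊆ closedBall 0 R ∨ Xoᶜ ⊆ closedBall 0 R := by
    rcases hbd with h | h
    · exact (h.subset_closedBall 0).imp fun _ => Or.inl
    · exact (h.subset_closedBall 0).imp fun _ => Or.inr
  obtain ⟨δ, hδ, hδε⟩ := (isCompact_closedBall 0 (R + 1)).exists_pos_forall_le
    hεc.continuousOn fun x _ => hεpos x
  have hmono : ∀ x ∈ closedBall 0 (R + 1), strongPert F (fun _ => δ) x ⊆ strongPert F ε x :=
    fun x hx => strongPert_mono (hδε x hx)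
  exact ⟨δ, hδ, hR.elim (hsafe.of_compl_unsafe_subset_closedBall hmono)
    (hsafe.of_compl_initial_subset_closedBall hmono)⟩

/-- Strong robust safety plus boundedness of `ℝⁿ \ X_u` or of `ℝⁿ \ X_o`
implies uniform strong robust safety. -/
theorem stmt6 {n : ℕ} (F : EuclideanSpace ℝ (Fin n) → Set (EuclideanSpace ℝ (Fin n)))
    (hFusc : UpperSemicontinuousSV F)
    (hFne : ∀ x, (F x).Nonempty) (hFcpt : ∀ x, IsCompact (F x)) (hFcvx : ∀ x, Convex ℝ (F x))
    (Xo Xu : Set (EuclideanSpace ℝ (Fin n)))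
    (hsrs : StronglyRobustlySafe F Xo Xu)
    (hbd : Bornology.IsBounded Xuᶜ ∨ Bornology.IsBounded Xoᶜ) :
    UniformlyStronglyRobustlySafe F Xo Xu :=
  stmt6_general F Xo Xu hsrs hbd
end

section
/- Let F : ℝⁿ → Set ℝⁿ, let X_o, X_u ⊆ ℝⁿ, and let B : ℝⁿ → ℝ be a barrier function candidate with respect to (X_o, X_u) with zero-sublevel set K. Suppose there exists an open neighborhood U of ∂K such that for every solution φ of ẋ ∈ F(x) whose range is contained in U, the map t ↦ B(φ(t)) is nonincreasing on the domain of φ. Then the system ẋ ∈ F(x) is safe with respect to (X_o, X_u). -/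
open Metric Set Filter MeasureTheory
open scoped Pointwise RealInnerProductSpace Topology

variable {E : Type*} [NormedAddCommGroup E] [NormedSpace ℝ E]

/-! Suppose a solution `φ` with `φ 0 ∈ K` reaches `Xu` at time `t`, so `φ t ∉ K`. At the last
time `σ ≤ t` at which `φ` visits `K` we have `φ σ ∈ ∂K ⊆ U`, so by continuity `φ` stays in `U`
on a window `[a, b]` around `σ` with `φ a ∈ K` and `φ b ∉ K`. Restricted to `[a, b]`, `φ` is a
solution inside `U`, hence `B (φ b) ≤ B (φ a) ≤ 0`, contradicting `φ b ∉ K`. -/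

theorem SolDomain.zero_mem {D : Set ℝ} (hD : SolDomain D) : (0 : ℝ) ∈ D := by
  rcases hD with ⟨T, hT, rfl⟩ | ⟨T, hT, rfl⟩ | rfl
  exacts [⟨le_rfl, hT⟩, ⟨le_rfl, hT⟩, self_mem_Ici]

theorem SolDomain.ordConnected {D : Set ℝ} (hD : SolDomain D) : D.OrdConnected := by
  rcases hD with ⟨T, -, rfl⟩ | ⟨T, -, rfl⟩ | rfl <;> infer_instance

theorem SolDomain.subset_Ici {D : Set ℝ} (hD : SolDomain D) : D ⊆ Ici 0 := by
  rcases hD with ⟨T, -, rfl⟩ | ⟨T, -, rfl⟩ | rfl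
  exacts [Icc_subset_Ici_self, Ico_subset_Ici_self, subset_rfl]

theorem SolDomain.Icc_subset_s10 {D : Set ℝ} (hD : SolDomain D) {t : ℝ} (ht : t ∈ D) :
    Icc 0 t ⊆ D :=
  hD.ordConnected.out hD.zero_mem ht

namespace IsSolutionOn

variable {F : E → Set E} {φ : ℝ → E} {D : Set ℝ}

theorem continuousOn_Icc_s10 (hφ : IsSolutionOn F φ D) {t : ℝ} (ht : t ∈ D) :
    ContinuousOn φ (Icc 0 t) := by
  obtain ⟨hD, v, hv, hφv, -⟩ := hφ
  have ht0 : (0 : ℝ) ≤ t := hD.subset_Ici ht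
  have hprim := intervalIntegral.continuousOn_primitive_interval (μ := volume)
    (a := 0) (b := t) (f := v) (by rw [uIcc_of_le ht0]; exact hv t ht)
  rw [uIcc_of_le ht0] at hprim
  exact (continuousOn_const.add hprim).congr fun s hs => hφv s (hD.Icc_subset_s10 ht hs)

theorem comp_add_Icc (hφ : IsSolutionOn F φ D) {a b : ℝ} (ha : 0 ≤ a) (hab : a ≤ b)
    (hb : b ∈ D) : IsSolutionOn F (fun s => φ (a + s)) (Icc 0 (b - a)) := by
  obtain ⟨hD, v, hv, hφv, hvF⟩ := hφ
  have hvi : IntervalIntegrable v volume 0 b :=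
    (intervalIntegrable_iff_integrableOn_Icc_of_le (ha.trans hab)).2 (hv b hb)
  have hvi_of_mem : ∀ c ∈ Icc 0 b, IntervalIntegrable v volume 0 c := fun c hc =>
    hvi.mono_set (uIcc_subset_uIcc left_mem_uIcc (by rwa [uIcc_of_le (ha.trans hab)]))
  refine ⟨Or.inl ⟨b - a, sub_nonneg.2 hab, rfl⟩, fun s => v (a + s), ?_, ?_, ?_⟩
  · intro s hs
    have has : a + s ∈ Icc 0 b := ⟨by linarith [hs.1], by linarith [hs.2]⟩
    have hva : IntervalIntegrable v volume a (a + s) :=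
      (hvi_of_mem a ⟨ha, hab⟩).symm.trans (hvi_of_mem _ has)
    have hshift := hva.comp_add_left a
    rw [sub_self, add_sub_cancel_left, intervalIntegrable_iff_integrableOn_Icc_of_le hs.1] at hshift
    exact hshift
  · intro s hs
    have has : a + s ∈ Icc 0 b := ⟨by linarith [hs.1], by linarith [hs.2]⟩
    simp only [add_zero]
    rw [intervalIntegral.integral_comp_add_left, add_zero,
      ← intervalIntegral.integral_interval_sub_left (hvi_of_mem _ has) (hvi_of_mem a ⟨ha, hab⟩),
      hφv _ (hD.Icc_subset_s10 hb has), hφv a (hD.Icc_subset_s10 hb ⟨ha, hab⟩)]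
    abel
  · have hpres := (measurePreserving_add_left volume a).restrict_preimage
      hD.ordConnected.measurableSet
    refine ae_restrict_of_ae_restrict_of_subset ?_ (hpres.quasiMeasurePreserving.ae hvF)
    intro s hs
    exact hD.Icc_subset_s10 hb ⟨by linarith [hs.1], by linarith [hs.2]⟩

end IsSolutionOn

section Crossing

variable {X : Type*} {φ : ℝ → X} {K U : Set X} {p q σ : ℝ}

theorem exists_apply_notMem_near_isLUB (hσ : IsLUB {s ∈ Icc p q | φ s ∈ K} σ)
    (hpq : p ≤ q) (hp : φ p ∈ K) (hq : φ q ∉ K) {ε : ℝ} (hε : 0 < ε) :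
    ∃ b ∈ Icc p q, σ ≤ b ∧ b < σ + ε ∧ φ b ∉ K := by
  have hpσ : p ≤ σ := hσ.1 ⟨left_mem_Icc.2 hpq, hp⟩
  have hσq : σ ≤ q := hσ.2 fun s hs => hs.1.2
  refine ⟨min (σ + ε / 2) q, ⟨le_min (by linarith) hpq, min_le_right _ _⟩,
    le_min (by linarith) hσq, min_lt_of_left_lt (by linarith), fun hK => ?_⟩
  rcases min_choice (σ + ε / 2) q with h | h <;> rw [h] at hK
  · have := hσ.1 ⟨⟨by linarith, h ▸ min_le_right _ _⟩, hK⟩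
    linarith
  · exact hq hK

variable [TopologicalSpace X]

theorem apply_isLUB_mem_frontier (hσ : IsLUB {s ∈ Icc p q | φ s ∈ K} σ)
    (hpq : p ≤ q) (hφ : ContinuousOn φ (Icc p q)) (hp : φ p ∈ K) (hq : φ q ∉ K) :
    φ σ ∈ frontier K := by
  have hσI : σ ∈ Icc p q := ⟨hσ.1 ⟨left_mem_Icc.2 hpq, hp⟩, hσ.2 fun s hs => hs.1.2⟩
  refine ⟨?_, fun hint => ?_⟩
  · have hσS : σ ∈ closure {s ∈ Icc p q | φ s ∈ K} := hσ.mem_closure ⟨p, left_mem_Icc.2 hpq, hp⟩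
    refine closure_mono ?_ (((hφ σ hσI).mono fun s hs => hs.1).mem_closure_image hσS)
    rintro _ ⟨s, hs, rfl⟩
    exact hs.2
  · obtain ⟨ε, hε, hball⟩ :=
      mem_nhdsWithin_iff.1 ((hφ σ hσI) (isOpen_interior.mem_nhds hint))
    obtain ⟨b, hbI, hσb, hbε, hbK⟩ := exists_apply_notMem_near_isLUB hσ hpq hp hq hε
    refine hbK (interior_subset (hball ⟨?_, hbI⟩))
    rw [mem_ball, Real.dist_eq, abs_lt]
    constructor <;> linarith

theorem ContinuousOn.exists_mapsTo_Icc_of_frontier_subset (hpq : p ≤ q)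
    (hφ : ContinuousOn φ (Icc p q)) (hU : IsOpen U) (hKU : frontier K ⊆ U)
    (hp : φ p ∈ K) (hq : φ q ∉ K) :
    ∃ a b, p ≤ a ∧ a ≤ b ∧ b ≤ q ∧ φ a ∈ K ∧ φ b ∉ K ∧ MapsTo φ (Icc a b) U := by
  set S := {s ∈ Icc p q | φ s ∈ K}
  have hσ : IsLUB S (sSup S) :=
    isLUB_csSup ⟨p, left_mem_Icc.2 hpq, hp⟩ ⟨q, fun s hs => hs.1.2⟩
  have hσI : sSup S ∈ Icc p q := ⟨hσ.1 ⟨left_mem_Icc.2 hpq, hp⟩, hσ.2 fun s hs => hs.1.2⟩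
  have hσU : φ (sSup S) ∈ U := hKU (apply_isLUB_mem_frontier hσ hpq hφ hp hq)
  obtain ⟨δ, hδ, hball⟩ := mem_nhdsWithin_iff.1 ((hφ _ hσI) (hU.mem_nhds hσU))
  obtain ⟨a, ⟨haI, haK⟩, hσa, haσ⟩ := hσ.exists_between (sub_lt_self _ hδ)
  obtain ⟨b, hbI, hσb, hbδ, hbK⟩ := exists_apply_notMem_near_isLUB hσ hpq hp hq hδ
  refine ⟨a, b, haI.1, haσ.trans hσb, hbI.2, haK, hbK, fun s hs => hball ⟨?_, ?_⟩⟩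
  · rw [mem_ball, Real.dist_eq, abs_lt]
    constructor <;> linarith [hs.1, hs.2]
  · exact ⟨haI.1.trans hs.1, hs.2.trans hbI.2⟩

end Crossing

/-- If `B` is a barrier function candidate and there is an open neighborhood
`U` of `∂K` such that `B` is nonincreasing along every solution that remains in `U`,
then `ẋ ∈ F x` is safe with respect to `(X_o, X_u)`. -/
theorem stmt10 {n : ℕ} (F : EuclideanSpace ℝ (Fin n) → Set (EuclideanSpace ℝ (Fin n)))
    (Xo Xu : Set (EuclideanSpace ℝ (Fin n))) (B : EuclideanSpace ℝ (Fin n) → ℝ)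
    (hBu : ∀ x ∈ Xu, 0 < B x) (hBo : ∀ x ∈ Xo, B x ≤ 0)
    (U : Set (EuclideanSpace ℝ (Fin n))) (hUopen : IsOpen U)
    (hU : frontier {x | B x ≤ 0} ⊆ U)
    (hmono : ∀ (φ : ℝ → EuclideanSpace ℝ (Fin n)) (D : Set ℝ), IsSolutionOn F φ D →
      (∀ t ∈ D, φ t ∈ U) → ∀ s ∈ D, ∀ t ∈ D, s ≤ t → B (φ t) ≤ B (φ s)) :
    Safe F Xo Xu := by
  intro φ D hφ hφ0 t ht hφt
  obtain ⟨a, b, ha, hab, hbt, haK, hbK, hmaps⟩ :=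
    (hφ.continuousOn_Icc_s10 ht).exists_mapsTo_Icc_of_frontier_subset (hφ.1.subset_Ici ht)
      hUopen hU (hBo _ hφ0) (not_le.2 (hBu _ hφt))
  have hψ := hφ.comp_add_Icc ha hab (hφ.1.Icc_subset_s10 ht ⟨ha.trans hab, hbt⟩)
  have hdecr := hmono _ _ hψ
    (fun s hs => hmaps ⟨by linarith [hs.1], by linarith [hs.2]⟩)
    0 ⟨le_rfl, sub_nonneg.2 hab⟩ (b - a) ⟨sub_nonneg.2 hab, le_rfl⟩ (sub_nonneg.2 hab)
  simp only [add_zero, add_sub_cancel] at hdecr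
  exact hbK (hdecr.trans haK)
end
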